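/- arXiv:0811.0525 — 4 statements merged into one kernel-verified Lean document; each statement's English description precedes it below -/
import Mathlib

section
/- Let m_0 ≥ 2m_1 > 0, set R = m_1/m_0 ∈ (0, 1/2], and define γ^{(n)}_k by γ^{(0)}_k = 1, γ^{(n+1)}_{2k} = m_0 γ^{(n)}_k, γ^{(n+1)}_{2k+1} = m_1(γ^{(n)}_k + γ^{(n)}_{k+1}). Then for every n ≥ 0, every odd integer k, and {k', k''} = {k-1, k+1} chosen so that 4 divides k'' (and hence k' ≡ 2 mod 4), one has (R/(1-R))·γ^{(n)}_{k'} ≤ (R/(1-R))·γ^{(n)}_{k''} ≤ γ^{(n)}_k ≤ γ^{(n)}_{k'} ≤ γ^{(n)}_{k''}. -/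
theorem gamma_neighbour_ordering (m₀ m₁ : ℝ) (hm₁ : 0 < m₁) (hm : 2 * m₁ ≤ m₀)
    (R : ℝ) (hR : R = m₁ / m₀)
    (γ : ℕ → ℤ → ℝ)
    (h0 : ∀ k, γ 0 k = 1)
    (heven : ∀ n k, γ (n + 1) (2 * k) = m₀ * γ n k)
    (hodd : ∀ n k, γ (n + 1) (2 * k + 1) = m₁ * (γ n k + γ n (k + 1))) :
    ∀ (n : ℕ) (k k' k'' : ℤ), Odd k →
      ((k' = k - 1 ∧ k'' = k + 1) ∨ (k' = k + 1 ∧ k'' = k - 1)) →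
      (4 : ℤ) ∣ k'' →
      R / (1 - R) * γ n k' ≤ R / (1 - R) * γ n k'' ∧
      R / (1 - R) * γ n k'' ≤ γ n k ∧
      γ n k ≤ γ n k' ∧ γ n k' ≤ γ n k'' := by
  have hm0 : 0 < m₀ := lt_of_lt_of_le (by linarith) hm
  have hd : 0 < m₀ - m₁ := by linarith
  have hRe : R / (1 - R) = m₁ / (m₀ - m₁) := by
    have h1 : 1 - m₁ / m₀ = (m₀ - m₁) / m₀ := by field_simp
    rw [hR, h1, div_div_eq_mul_div, div_mul_eq_mul_div, mul_comm,
      mul_div_cancel_left₀ _ hm0.ne']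
  have hρ0 : 0 ≤ m₁ / (m₀ - m₁) := le_of_lt (div_pos hm₁ hd)
  have hρ1 : m₁ / (m₀ - m₁) ≤ 1 := by
    rw [div_le_one hd]; linarith
  have hpos : ∀ n k, 0 < γ n k := by
    intro n
    induction n with
    | zero => intro k; rw [h0]; norm_num
    | succ n ih =>
      intro k
      rcases Int.even_or_odd k with ⟨j, hj⟩ | ⟨j, hj⟩
      · have e : k = 2 * j := by omega
        rw [e, heven]; exact mul_pos hm0 (ih j)
      · have e : k = 2 * j + 1 := by omega
        rw [e, hodd]; exact mul_pos hm₁ (by linarith [ih j, ih (j + 1)])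
  have key : ∀ n (j : ℤ), Odd j →
      γ n j ≤ γ n (j - 1) ∧ γ n j ≤ γ n (j + 1) ∧
      m₁ / (m₀ - m₁) * γ n (j - 1) ≤ γ n j ∧
      m₁ / (m₀ - m₁) * γ n (j + 1) ≤ γ n j := by
    intro n
    induction n with
    | zero =>
      intro j _
      simp only [h0, mul_one]
      exact ⟨le_refl _, le_refl _, hρ1, hρ1⟩
    | succ n ih =>
      intro m hmodd
      obtain ⟨j, hj⟩ := hmodd
      have e1 : m - 1 = 2 * j := by omega
      have e2 : m + 1 = 2 * (j + 1) := by omega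
      have e0 : m = 2 * j + 1 := by omega
      rw [e1, e2, e0, heven, heven, hodd]
      set A := γ n j with hA
      set B := γ n (j + 1) with hB
      have hApos := hpos n j
      have hBpos := hpos n (j + 1)
      -- establish the two key linear inequalities
      have hkey : m₁ * (A + B) ≤ m₀ * A ∧ m₁ * (A + B) ≤ m₀ * B := by
        rcases Int.even_or_odd j with ⟨i, hi⟩ | ⟨i, hi⟩
        · -- j even, j+1 odd
          have h := ih (j + 1) ⟨i, by omega⟩
          rw [add_sub_cancel_right] at h
          have h1 : B ≤ A := h.1
          have h3 : m₁ / (m₀ - m₁) * A ≤ B := h.2.2.1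
          rw [div_mul_eq_mul_div, div_le_iff₀ hd] at h3
          constructor
          · nlinarith
          · nlinarith
        · -- j odd
          have h := ih j ⟨i, by omega⟩
          have h1 : A ≤ B := h.2.1
          have h3 : m₁ / (m₀ - m₁) * B ≤ A := h.2.2.2
          rw [div_mul_eq_mul_div, div_le_iff₀ hd] at h3
          constructor
          · nlinarith
          · nlinarith
      obtain ⟨hkA, hkB⟩ := hkey
      refine ⟨by linarith, by linarith, ?_, ?_⟩
      · rw [div_mul_eq_mul_div, div_le_iff₀ hd]
        nlinarith [mul_le_mul_of_nonneg_left hkB hm₁.le]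
      · rw [div_mul_eq_mul_div, div_le_iff₀ hd]
        nlinarith [mul_le_mul_of_nonneg_left hkA hm₁.le]
  intro n k k' k'' hk hcase hdvd
  cases n with
  | zero =>
    simp only [h0, mul_one]
    exact ⟨le_refl _, by rw [hRe]; exact hρ1, le_refl _, le_refl _⟩
  | succ n =>
    obtain ⟨j, hj⟩ := hk
    rcases hcase with ⟨h1, h2⟩ | ⟨h1, h2⟩
    · -- k' = k - 1 = 2j, k'' = k + 1 = 2(j+1), 4 ∣ 2(j+1) so j odd
      obtain ⟨c, hc⟩ := hdvd
      have hjodd : Odd j := ⟨c - 1, by omega⟩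
      have h := key n j hjodd
      have hAB : γ n j ≤ γ n (j + 1) := h.2.1
      have h3 : m₁ / (m₀ - m₁) * γ n (j + 1) ≤ γ n j := h.2.2.2
      rw [div_mul_eq_mul_div, div_le_iff₀ hd] at h3
      have e : k = 2 * j + 1 := by omega
      have e' : k' = 2 * j := by omega
      have e'' : k'' = 2 * (j + 1) := by omega
      rw [e, e', e'', heven, heven, hodd, hRe]
      set A := γ n j
      set B := γ n (j + 1)
      have hApos := hpos n j
      have hBpos := hpos n (j + 1)
      refine ⟨?_, ?_, by linarith, by nlinarith⟩
      · apply mul_le_mul_of_nonneg_left _ hρ0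
        nlinarith
      · rw [div_mul_eq_mul_div, div_le_iff₀ hd]
        nlinarith [mul_le_mul_of_nonneg_left h3 hm₁.le]
    · -- k' = k + 1 = 2(j+1), k'' = k - 1 = 2j, 4 ∣ 2j so j even, j+1 odd
      obtain ⟨c, hc⟩ := hdvd
      have hjodd : Odd (j + 1) := ⟨c, by omega⟩
      have h := key n (j + 1) hjodd
      rw [add_sub_cancel_right] at h
      have hBA : γ n (j + 1) ≤ γ n j := h.1
      have h3 : m₁ / (m₀ - m₁) * γ n j ≤ γ n (j + 1) := h.2.2.1
      rw [div_mul_eq_mul_div, div_le_iff₀ hd] at h3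
      have e : k = 2 * j + 1 := by omega
      have e' : k' = 2 * (j + 1) := by omega
      have e'' : k'' = 2 * j := by omega
      rw [e, e', e'', heven, heven, hodd, hRe]
      set A := γ n j
      set B := γ n (j + 1)
      have hApos := hpos n j
      have hBpos := hpos n (j + 1)
      refine ⟨?_, ?_, by linarith, by nlinarith⟩
      · apply mul_le_mul_of_nonneg_left _ hρ0
        nlinarith
      · rw [div_mul_eq_mul_div, div_le_iff₀ hd]
        nlinarith [mul_le_mul_of_nonneg_left h3 hm₁.le]
end

section
/- With the setup m_0 ≥ 2m_1 > 0 and γ^{(n)}_k defined by γ^{(0)}_k = 1, γ^{(n+1)}_{2k} = m_0 γ^{(n)}_k, γ^{(n+1)}_{2k+1} = m_1(γ^{(n)}_k + γ^{(n)}_{k+1}), let k_0 = 0, k'_0 = 1, k_{n+1} = k_n + k'_n, k'_{n+1} = 2k_n. Then for all n ≥ 0: γ^{(n)}_{k_n} = min over all integers k of γ^{(n)}_k = min over odd k of γ^{(n)}_k, and γ^{(n)}_{k'_n} = min over even k of γ^{(n)}_k. -/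
theorem gamma_minimizing_sequences (m₀ m₁ : ℝ) (hm₁ : 0 < m₁) (hm : 2 * m₁ ≤ m₀)
    (γ : ℕ → ℤ → ℝ)
    (h0 : ∀ k, γ 0 k = 1)
    (heven : ∀ n k, γ (n + 1) (2 * k) = m₀ * γ n k)
    (hodd : ∀ n k, γ (n + 1) (2 * k + 1) = m₁ * (γ n k + γ n (k + 1)))
    (kseq kseq' : ℕ → ℤ)
    (hk0 : kseq 0 = 0) (hk0' : kseq' 0 = 1)
    (hkrec : ∀ n, kseq (n + 1) = kseq n + kseq' n)
    (hkrec' : ∀ n, kseq' (n + 1) = 2 * kseq n) :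
    ∀ n : ℕ,
      (∀ k : ℤ, γ n (kseq n) ≤ γ n k) ∧
      (∃ k : ℤ, Odd k ∧ γ n k = γ n (kseq n)) ∧
      (∀ k : ℤ, γ n (kseq' n) ≤ γ n (2 * k)) ∧
      (∃ k : ℤ, γ n (2 * k) = γ n (kseq' n)) := by
  have hm0 : 0 < m₀ := by linarith
  -- adjacency of the two sequences
  have hadj : ∀ n, kseq' n = kseq n + 1 ∨ kseq n = kseq' n + 1 := by
    intro n
    induction n with
    | zero => left; rw [hk0, hk0']; norm_num
    | succ n ih =>
      rcases ih with h | h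
      · right; rw [hkrec n, hkrec' n, h]; ring
      · left; rw [hkrec n, hkrec' n, h]; ring
  have main : ∀ n,
      (∀ k : ℤ, γ n (kseq n) ≤ γ n k) ∧
      (∃ k : ℤ, Odd k ∧ γ n k = γ n (kseq n)) ∧
      (∀ k : ℤ, γ n (kseq' n) ≤ γ n (2 * k)) ∧
      (∃ k : ℤ, γ n (2 * k) = γ n (kseq' n)) ∧
      0 ≤ γ n (kseq n) ∧
      m₁ * γ n (kseq' n) ≤ (m₀ - m₁) * γ n (kseq n) := by
    intro n
    induction n with
    | zero =>
      refine ⟨fun k => by rw [h0, h0], ⟨1, odd_one, by rw [h0, h0]⟩,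
        fun k => by rw [h0, h0], ⟨0, by rw [h0, h0]⟩, by rw [h0]; norm_num, ?_⟩
      rw [h0, h0]; linarith
    | succ n ih =>
      obtain ⟨h1, h2, h3, h4, h5, h6⟩ := ih
      have hab : γ n (kseq n) ≤ γ n (kseq' n) := h1 _
      -- value at the new odd minimizer
      have hval : γ (n + 1) (kseq (n + 1)) = m₁ * (γ n (kseq n) + γ n (kseq' n)) := by
        rcases hadj n with h | h
        · have e : kseq (n + 1) = 2 * kseq n + 1 := by rw [hkrec n, h]; ring
          rw [e, hodd n (kseq n), ← h]
        · have e : kseq (n + 1) = 2 * kseq' n + 1 := by rw [hkrec n, h]; ring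
          rw [e, hodd n (kseq' n), ← h]; ring
      have hoddk : Odd (kseq (n + 1)) := by
        rcases hadj n with h | h
        · exact ⟨kseq n, by rw [hkrec n, h]; ring⟩
        · exact ⟨kseq' n, by rw [hkrec n, h]; ring⟩
      -- global minimality
      have h1' : ∀ k : ℤ, γ (n + 1) (kseq (n + 1)) ≤ γ (n + 1) k := by
        intro k
        rcases Int.even_or_odd k with ⟨j, hj⟩ | ⟨j, hj⟩
        · have e : k = 2 * j := by omega
          rw [e, heven n j, hval]
          have := mul_le_mul_of_nonneg_left (h1 j) hm0.le
          nlinarith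
        · have e : k = 2 * j + 1 := by omega
          rw [e, hodd n j, hval]
          have hsum : γ n (kseq n) + γ n (kseq' n) ≤ γ n j + γ n (j + 1) := by
            rcases Int.even_or_odd j with ⟨m, hmj⟩ | ⟨m, hmj⟩
            · have e1 : j = 2 * m := by omega
              linarith [h1 (j + 1), (show γ n (kseq' n) ≤ γ n j by rw [e1]; exact h3 m)]
            · have e1 : j + 1 = 2 * (m + 1) := by omega
              linarith [h1 j, (show γ n (kseq' n) ≤ γ n (j+1) by rw [e1]; exact h3 (m+1))]
          nlinarith
      refine ⟨h1', ⟨kseq (n + 1), hoddk, rfl⟩, ?_, ⟨kseq n, by rw [hkrec' n]⟩, ?_, ?_⟩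
      · intro k
        rw [hkrec' n, heven n (kseq n), heven n k]
        exact mul_le_mul_of_nonneg_left (h1 k) hm0.le
      · rw [hval]; nlinarith
      · rw [hval, hkrec' n, heven n (kseq n)]
        nlinarith [mul_le_mul_of_nonneg_left hab (mul_pos hm₁ hm₁).le]
  intro n
  obtain ⟨a, b, c, d, _, _⟩ := main n
  exact ⟨a, b, c, d⟩
end

section
/- With m_0 ≥ 2m_1 > 0 and the sequences above, the minimal values a_n := γ^{(n)}_{k_n} satisfy a_0 = 1, a_1 = 2m_1, and a_{n+2} = m_1 a_{n+1} + m_1 m_0 a_n for all n ≥ 0. -/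
theorem minimal_gamma_recurrence (m₀ m₁ : ℝ) (hm₁ : 0 < m₁) (hm : 2 * m₁ ≤ m₀)
    (γ : ℕ → ℤ → ℝ)
    (h0 : ∀ k, γ 0 k = 1)
    (heven : ∀ n k, γ (n + 1) (2 * k) = m₀ * γ n k)
    (hodd : ∀ n k, γ (n + 1) (2 * k + 1) = m₁ * (γ n k + γ n (k + 1)))
    (kseq kseq' : ℕ → ℤ)
    (hk0 : kseq 0 = 0) (hk0' : kseq' 0 = 1)
    (hkrec : ∀ n, kseq (n + 1) = kseq n + kseq' n)
    (hkrec' : ∀ n, kseq' (n + 1) = 2 * kseq n)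
    (a : ℕ → ℝ) (ha : ∀ n, a n = γ n (kseq n)) :
    a 0 = 1 ∧ a 1 = 2 * m₁ ∧
    ∀ n, a (n + 2) = m₁ * a (n + 1) + m₁ * m₀ * a n := by
  have hdiff : ∀ n, kseq' n = kseq n + (-1 : ℤ) ^ n := by
    intro n
    induction n with
    | zero => simp [hk0, hk0']
    | succ n ih =>
      rw [hkrec', hkrec, ih]
      ring
  set b : ℕ → ℝ := fun n => γ n (kseq' n) with hb
  have hbrec : ∀ n, b (n + 1) = m₀ * a n := by
    intro n
    simp only [hb, hkrec', heven, ha]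
  have harec : ∀ n, a (n + 1) = m₁ * (a n + b n) := by
    intro n
    rcases Nat.even_or_odd n with he | ho
    · have h1 : kseq' n = kseq n + 1 := by
        rw [hdiff n, (by exact he.neg_one_pow : ((-1:ℤ))^n = 1)]
      have h2 : kseq (n + 1) = 2 * kseq n + 1 := by rw [hkrec, h1]; ring
      simp only [ha, h2, hodd, hb, h1]
    · have h1 : kseq n = kseq' n + 1 := by
        rw [hdiff n, (by exact ho.neg_one_pow : ((-1:ℤ))^n = -1)]
        ring
      have h2 : kseq (n + 1) = 2 * kseq' n + 1 := by rw [hkrec, h1]; ring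
      simp only [ha, h2, hodd, hb, h1]
      ring
  refine ⟨by rw [ha, hk0, h0], ?_, ?_⟩
  · have : b 0 = 1 := by rw [hb]; simp [hk0', h0]
    rw [harec 0, this, ha, hk0, h0]; ring
  · intro n
    rw [harec (n + 1), hbrec n, harec n]
    ring
end

section
/- Let M ≥ 2, suppose m_e > 0 for all |e| < M, and define R := min over 0 < k < M and k' ∈ {k-1, k+1} of min(m_{k-M}, m_k)/max(m_{k'-M}, m_{k'}) (with m_{±M} = 0). Define γ^{(n)} : ℤ → ℝ by γ^{(0)}_k = 1 and γ^{(n+1)}_{Mk+l} = m_{l-M} γ^{(n)}_{k+1} + m_l γ^{(n)}_k for l ∈ {0,...,M-1}. If additionally m_e + m_{e-M} ≤ m_0 for all e ∈ {0,...,M}, then for all n ≥ 0 and all k ∈ ℤ: min(γ^{(n)}_k, γ^{(n)}_{k+1}) / max(γ^{(n)}_k, γ^{(n)}_{k+1}) ≥ R. -/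
theorem bounded_skewness (M : ℕ) (hM : 2 ≤ M) (m : ℤ → ℝ)
    (hmpos : ∀ e : ℤ, |e| < (M : ℤ) → 0 < m e)
    (hmM : m (M : ℤ) = 0) (hmM' : m (-(M : ℤ)) = 0)
    (hmsym : ∀ e : ℤ, m e = m (-e))
    (hCS : ∀ e : ℤ, 0 ≤ e → e ≤ (M : ℤ) → m e + m (e - M) ≤ m 0)
    (γ : ℕ → ℤ → ℝ)
    (h0 : ∀ k, γ 0 k = 1)
    (hrec : ∀ (n : ℕ) (k l : ℤ), 0 ≤ l → l < (M : ℤ) →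
      γ (n + 1) ((M : ℤ) * k + l) = m (l - M) * γ n (k + 1) + m l * γ n k)
    (R : ℝ)
    (hR : IsLeast {x : ℝ | ∃ k k' : ℤ, 0 < k ∧ k < (M : ℤ) ∧
      (k' = k - 1 ∨ k' = k + 1) ∧
      x = min (m (k - M)) (m k) / max (m (k' - M)) (m k')} R) :
    ∀ (n : ℕ) (k : ℤ),
      R ≤ min (γ n k) (γ n (k + 1)) / max (γ n k) (γ n (k + 1)) := by
  obtain ⟨⟨k₀, k₀', hk₀, hk₀M, hk₀', hRdef⟩, hRlb⟩ := hR
  have hMZ : (2:ℤ) ≤ (M:ℤ) := by exact_mod_cast hM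
  have hMpos : (0:ℤ) < (M:ℤ) := by omega
  have hm0 : 0 < m 0 := hmpos 0 (by simpa using hMpos)
  have hmnonneg : ∀ e : ℤ, |e| ≤ (M:ℤ) → 0 ≤ m e := by
    intro e he
    rcases lt_or_eq_of_le he with h | h
    · exact (hmpos e h).le
    · rcases (abs_eq (le_of_lt hMpos)).mp h with h | h <;> subst h <;>
        simp [hmM, hmM']
  -- R > 0
  have hmaxpos : ∀ l' : ℤ, 0 ≤ l' → l' ≤ (M:ℤ) → 0 < max (m (l' - M)) (m l') := by
    intro l' h0' hM'
    rcases lt_or_eq_of_le hM' with h | h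
    · exact lt_max_of_lt_right (hmpos l' (abs_lt.mpr ⟨by omega, h⟩))
    · subst h
      refine lt_max_of_lt_left ?_
      have : (M:ℤ) - M = 0 := by ring
      rw [this]; exact hm0
  have hRpos : 0 < R := by
    rw [hRdef]
    apply div_pos
    · apply lt_min
      · exact hmpos _ (abs_lt.mpr ⟨by omega, by omega⟩)
      · exact hmpos _ (abs_lt.mpr ⟨by omega, hk₀M⟩)
    · apply hmaxpos <;> omega
  -- R ≤ 1
  have hR1 : R ≤ 1 := by
    have hmem : min (m (1 - M)) (m 1) / max (m (0 - (M:ℤ))) (m 0) ∈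
        {x : ℝ | ∃ k k' : ℤ, 0 < k ∧ k < (M : ℤ) ∧
          (k' = k - 1 ∨ k' = k + 1) ∧
          x = min (m (k - M)) (m k) / max (m (k' - M)) (m k')} := by
      exact ⟨1, 0, by omega, by omega, Or.inl (by ring), rfl⟩
    have hle := hRlb hmem
    have e0 : (0:ℤ) - M = -(M:ℤ) := by ring
    rw [e0, hmM'] at hle
    have hmax : max (0:ℝ) (m 0) = m 0 := max_eq_right hm0.le
    rw [hmax] at hle
    refine le_trans hle ?_
    rw [div_le_one hm0]
    have h1M : 0 ≤ m (1 - M) := hmnonneg _ (by rw [abs_le]; omega)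
    have := hCS 1 (by omega) (by omega)
    calc min (m (1 - M)) (m 1) ≤ m 1 := min_le_right _ _
      _ ≤ m 0 := by linarith
  -- extended recurrence, valid also at l = M
  have hrec' : ∀ (n : ℕ) (k l : ℤ), 0 ≤ l → l ≤ (M:ℤ) →
      γ (n + 1) ((M:ℤ) * k + l) = m (l - M) * γ n (k + 1) + m l * γ n k := by
    intro n k l h0l hlM
    rcases lt_or_eq_of_le hlM with h | h
    · exact hrec n k l h0l h
    · subst h
      have e1 : (M:ℤ) * k + M = (M:ℤ) * (k + 1) + 0 := by ring
      rw [e1, hrec n (k + 1) 0 le_rfl hMpos]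
      have e2 : (0:ℤ) - M = -(M:ℤ) := by ring
      have e3 : (M:ℤ) - M = 0 := by ring
      rw [e2, e3, hmM', hmM]
      ring
  -- positivity of γ
  have hγpos : ∀ n k, 0 < γ n k := by
    intro n
    induction n with
    | zero => intro k; rw [h0]; norm_num
    | succ n ih =>
      intro j
      have hj : j = (M:ℤ) * (j / M) + j % M := (Int.mul_ediv_add_emod j M).symm
      have h1 : 0 ≤ j % (M:ℤ) := Int.emod_nonneg j (by omega)
      have h2 : j % (M:ℤ) < M := Int.emod_lt_of_pos j hMpos
      rw [hj, hrec n _ _ h1 h2]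
      have hc1 : 0 ≤ m (j % M - M) := hmnonneg _ (by rw [abs_le]; omega)
      have hc2 : 0 < m (j % M) := hmpos _ (abs_lt.mpr ⟨by omega, h2⟩)
      have := ih (j / M + 1)
      have := ih (j / M)
      positivity
  -- main induction
  have main : ∀ n k, R * γ n k ≤ γ n (k + 1) ∧ R * γ n (k + 1) ≤ γ n k := by
    intro n
    induction n with
    | zero => intro k; rw [h0, h0]; constructor <;> simpa using hR1
    | succ n ih =>
      have key : ∀ (k l l' : ℤ), 0 ≤ l → l ≤ (M:ℤ) → 0 ≤ l' → l' ≤ (M:ℤ) →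
          (l' = l - 1 ∨ l' = l + 1) →
          R * (m (l' - M) * γ n (k + 1) + m l' * γ n k) ≤
            m (l - M) * γ n (k + 1) + m l * γ n k := by
        intro k l l' hl0 hlM hl'0 hl'M hll'
        have ha : 0 < γ n k := hγpos n k
        have ha' : 0 < γ n (k + 1) := hγpos n (k + 1)
        have hRa : R * γ n k ≤ γ n (k + 1) := (ih k).1
        have hRa' : R * γ n (k + 1) ≤ γ n k := (ih k).2
        by_cases hc0 : l = 0
        · subst hc0
          have hl'1 : l' = 1 := by omega
          subst hl'1
          have e0 : (0:ℤ) - M = -(M:ℤ) := by ring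
          rw [e0, hmM']
          have h1M : 0 ≤ m (1 - M) := hmnonneg _ (by rw [abs_le]; omega)
          have h1p : 0 < m 1 := hmpos 1 (by rw [abs_lt]; omega)
          have hCS1 := hCS 1 (by omega) (by omega)
          calc R * (m (1 - M) * γ n (k + 1) + m 1 * γ n k)
              = m (1 - M) * (R * γ n (k + 1)) + (R * m 1) * γ n k := by ring
            _ ≤ m (1 - M) * γ n k + m 1 * γ n k := by
                apply add_le_add
                · exact mul_le_mul_of_nonneg_left hRa' h1M
                · exact mul_le_mul_of_nonneg_right (by nlinarith) ha.le
            _ = (m 1 + m (1 - M)) * γ n k := by ring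
            _ ≤ m 0 * γ n k := mul_le_mul_of_nonneg_right hCS1 ha.le
            _ = 0 * γ n (k + 1) + m 0 * γ n k := by ring
        · by_cases hcM : l = (M:ℤ)
          · subst hcM
            have hl' : l' = (M:ℤ) - 1 := by omega
            subst hl'
            have e3 : (M:ℤ) - M = 0 := by ring
            rw [e3, hmM]
            have hm1 : 0 ≤ m ((M:ℤ) - 1 - M) := hmnonneg _ (by rw [abs_le]; omega)
            have hmM1 : 0 < m ((M:ℤ) - 1) := hmpos _ (abs_lt.mpr ⟨by omega, by omega⟩)
            have hCSM := hCS ((M:ℤ) - 1) (by omega) (by omega)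
            calc R * (m ((M:ℤ) - 1 - M) * γ n (k + 1) + m ((M:ℤ) - 1) * γ n k)
                = (R * m ((M:ℤ) - 1 - M)) * γ n (k + 1) + m ((M:ℤ) - 1) * (R * γ n k) := by
                  ring
              _ ≤ m ((M:ℤ) - 1 - M) * γ n (k + 1) + m ((M:ℤ) - 1) * γ n (k + 1) := by
                  apply add_le_add
                  · exact mul_le_mul_of_nonneg_right (by nlinarith) ha'.le
                  · exact mul_le_mul_of_nonneg_left hRa hmM1.le
              _ = (m ((M:ℤ) - 1) + m ((M:ℤ) - 1 - M)) * γ n (k + 1) := by ring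
              _ ≤ m 0 * γ n (k + 1) := mul_le_mul_of_nonneg_right hCSM ha'.le
              _ = m 0 * γ n (k + 1) + 0 * γ n k := by ring
          · have hlpos : 0 < l := by omega
            have hlltM : l < (M:ℤ) := by omega
            have hmem : min (m (l - M)) (m l) / max (m (l' - M)) (m l') ∈
                {x : ℝ | ∃ k k' : ℤ, 0 < k ∧ k < (M : ℤ) ∧
                  (k' = k - 1 ∨ k' = k + 1) ∧
                  x = min (m (k - M)) (m k) / max (m (k' - M)) (m k')} :=
              ⟨l, l', hlpos, hlltM, hll', rfl⟩
            have hle := hRlb hmem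
            have hmax : 0 < max (m (l' - M)) (m l') := hmaxpos l' hl'0 hl'M
            have hRmax : R * max (m (l' - M)) (m l') ≤ min (m (l - M)) (m l) :=
              (le_div_iff₀ hmax).mp hle
            have h1 : R * m (l' - M) ≤ m (l - M) :=
              le_trans (mul_le_mul_of_nonneg_left (le_max_left _ _) hRpos.le)
                (le_trans hRmax (min_le_left _ _))
            have h2 : R * m l' ≤ m l :=
              le_trans (mul_le_mul_of_nonneg_left (le_max_right _ _) hRpos.le)
                (le_trans hRmax (min_le_right _ _))
            calc R * (m (l' - M) * γ n (k + 1) + m l' * γ n k)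
                = (R * m (l' - M)) * γ n (k + 1) + (R * m l') * γ n k := by ring
              _ ≤ m (l - M) * γ n (k + 1) + m l * γ n k :=
                  add_le_add (mul_le_mul_of_nonneg_right h1 ha'.le)
                    (mul_le_mul_of_nonneg_right h2 ha.le)
      intro j
      have hj : j = (M:ℤ) * (j / M) + j % M := (Int.mul_ediv_add_emod j M).symm
      have h1 : 0 ≤ j % (M:ℤ) := Int.emod_nonneg j (by omega)
      have h2 : j % (M:ℤ) < M := Int.emod_lt_of_pos j hMpos
      have hx : γ (n + 1) j = m (j % M - M) * γ n (j / M + 1) + m (j % M) * γ n (j / M) := by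
        conv_lhs => rw [hj]
        exact hrec' n _ _ h1 h2.le
      have hy : γ (n + 1) (j + 1) =
          m (j % M + 1 - M) * γ n (j / M + 1) + m (j % M + 1) * γ n (j / M) := by
        have e : j + 1 = (M:ℤ) * (j / M) + (j % M + 1) := by omega
        rw [e]
        exact hrec' n _ _ (by omega) (by omega)
      rw [hx, hy]
      constructor
      · have := key (j / M) (j % M + 1) (j % M) (by omega) (by omega) h1 h2.le
          (Or.inl (by ring))
        convert this using 3
      · have := key (j / M) (j % M) (j % M + 1) h1 h2.le (by omega) (by omega)
          (Or.inr rfl)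
        convert this using 3
  intro n k
  have hA := (main n k).1
  have hB := (main n k).2
  have hx := hγpos n k
  have hy := hγpos n (k + 1)
  rw [le_div_iff₀ (lt_max_of_lt_left hx)]
  rcases le_total (γ n k) (γ n (k + 1)) with h | h
  · rw [max_eq_right h, min_eq_left h]; exact hB
  · rw [max_eq_left h, min_eq_right h]; exact hA
end
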